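/- Let K be a field and O a subring of K, and let 1 ≤ m ≤ n. Let Y = [[X₁,X₂],[X₃,X₄]] ∈ M_{2m,n}(K) with X₁ ∈ B⁻ₘ(O)·Bₘ(O), X₂ ∈ M_{m,n−m}(O), X₃ ∈ M_{m,m}(O), X₄ ∈ M_{m,n−m}(O). Let A ∈ M_{m,m}(K) be lower-triangular with all diagonal entries 1, let C ∈ M_{m,m}(K), and suppose the block matrix g = [[A,0],[C,ᵗA⁻¹]] satisfies gᵀ·J₂ₘ·g = J₂ₘ. Then g·Y lies in V_supp if and only if all entries of A and of C lie in O. -/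

import Mathlib

open Matrix

/-- Every entry of the matrix lies in the subring `O`. -/
def MemO {K : Type*} [Field K] {α β : Type*} (O : Subring K) (M : Matrix α β K) : Prop :=
  ∀ i j, M i j ∈ O

/-- The matrix `J₂ₘ = [[0,1ₘ],[1ₘ,0]]`. -/
def Jmat (K : Type*) [Field K] (m : ℕ) : Matrix (Fin m ⊕ Fin m) (Fin m ⊕ Fin m) K :=
  Matrix.fromBlocks 0 1 1 0

/-- `Bₘ(O)`: upper-triangular matrices with entries in `O` and diagonal entries units of `O`. -/
def Bpos {K : Type*} [Field K] (O : Subring K) (m : ℕ) : Set (Matrix (Fin m) (Fin m) K) :=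
  {M | MemO O M ∧ (∀ i j : Fin m, (j : ℕ) < (i : ℕ) → M i j = 0) ∧
    ∀ i, ∃ c ∈ O, M i i * c = 1}

/-- `B⁻ₘ(O)`: lower-triangular matrices with entries in `O` and diagonal entries units of `O`. -/
def Bneg {K : Type*} [Field K] (O : Subring K) (m : ℕ) : Set (Matrix (Fin m) (Fin m) K) :=
  {M | MemO O M ∧ (∀ i j : Fin m, (i : ℕ) < (j : ℕ) → M i j = 0) ∧
    ∀ i, ∃ c ∈ O, M i i * c = 1}

/-- `B⁻ₘ(O)·Bₘ(O)`, the set of products. -/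
def BnegBpos {K : Type*} [Field K] (O : Subring K) (m : ℕ) :
    Set (Matrix (Fin m) (Fin m) K) :=
  {M | ∃ l ∈ Bneg O m, ∃ u ∈ Bpos O m, M = l * u}

/-- `V_supp`: block matrices `[[X₁,X₂],[X₃,X₄]]` with `X₁ ∈ B⁻ₘ(O)·Bₘ(O)` and
`X₂, X₃, X₄` over `O`. -/
def Vsupp {K : Type*} [Field K] (O : Subring K) (m r : ℕ) :
    Set (Matrix (Fin m ⊕ Fin m) (Fin m ⊕ Fin r) K) :=
  {X | X.toBlocks₁₁ ∈ BnegBpos O m ∧ MemO O X.toBlocks₁₂ ∧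
    MemO O X.toBlocks₂₁ ∧ MemO O X.toBlocks₂₂}

section Helpers
variable {K : Type*} [Field K] (O : Subring K) {m : ℕ}

lemma memO_mul {α β γ : Type*} [Fintype β] {M : Matrix α β K} {N : Matrix β γ K}
    (hM : MemO O M) (hN : MemO O N) : MemO O (M * N) := fun i j => by
  rw [Matrix.mul_apply]
  exact Subring.sum_mem _ fun k _ => O.mul_mem (hM i k) (hN k j)

lemma memO_det {M : Matrix (Fin m) (Fin m) K} (hM : MemO O M) : M.det ∈ O := by
  rw [Matrix.det_apply']
  refine Subring.sum_mem _ fun σ _ => O.mul_mem ?_ (Subring.prod_mem _ fun i _ => hM _ _)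
  exact intCast_mem O _

lemma memO_adjugate {M : Matrix (Fin m) (Fin m) K} (hM : MemO O M) :
    MemO O M.adjugate := fun i j => by
  rw [Matrix.adjugate_apply]
  refine memO_det O fun i' j' => ?_
  rw [Matrix.updateRow_apply]
  split
  · rcases eq_or_ne i j' with h | h <;> simp [Pi.single_apply, h, O.one_mem, O.zero_mem]
  · exact hM i' j'

lemma inv_facts {M : Matrix (Fin m) (Fin m) K} (hM : MemO O M) {c : K} (hc : c ∈ O)
    (hdet : M.det * c = 1) :
    MemO O M⁻¹ ∧ M * M⁻¹ = 1 ∧ M⁻¹ * M = 1 := by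
  have hdu : IsUnit M.det := IsUnit.of_mul_eq_one _ hdet
  have hinv : M.det⁻¹ = c := inv_eq_of_mul_eq_one_right hdet
  refine ⟨fun i j => ?_, Matrix.mul_nonsing_inv M hdu, Matrix.nonsing_inv_mul M hdu⟩
  rw [Matrix.inv_def, Ring.inverse_eq_inv', Matrix.smul_apply, smul_eq_mul, hinv]
  exact O.mul_mem hc (memO_adjugate O hM i j)

lemma lower_det {M : Matrix (Fin m) (Fin m) K}
    (htri : ∀ i j : Fin m, (i : ℕ) < (j : ℕ) → M i j = 0) : M.det = ∏ i, M i i :=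
  Matrix.det_of_lowerTriangular M fun i j hij => htri i j hij

lemma upper_det {M : Matrix (Fin m) (Fin m) K}
    (htri : ∀ i j : Fin m, (j : ℕ) < (i : ℕ) → M i j = 0) : M.det = ∏ i, M i i :=
  Matrix.det_of_upperTriangular (fun i j hij => htri i j hij)

lemma bneg_inv_facts {M : Matrix (Fin m) (Fin m) K} (hM : M ∈ Bneg O m) :
    MemO O M⁻¹ ∧ M * M⁻¹ = 1 ∧ M⁻¹ * M = 1 := by
  obtain ⟨hmem, htri, hdiag⟩ := hM
  choose c hc hc1 using hdiag
  refine inv_facts O hmem (c := ∏ i : Fin m, c i) (Subring.prod_mem _ fun i _ => hc i) ?_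
  rw [lower_det htri, ← Finset.prod_mul_distrib]
  simp [hc1]

lemma bpos_inv_facts {M : Matrix (Fin m) (Fin m) K} (hM : M ∈ Bpos O m) :
    MemO O M⁻¹ ∧ M * M⁻¹ = 1 ∧ M⁻¹ * M = 1 := by
  obtain ⟨hmem, htri, hdiag⟩ := hM
  choose c hc hc1 using hdiag
  refine inv_facts O hmem (c := ∏ i : Fin m, c i) (Subring.prod_mem _ fun i _ => hc i) ?_
  rw [upper_det htri, ← Finset.prod_mul_distrib]
  simp [hc1]

lemma lower_mul_diag {M N : Matrix (Fin m) (Fin m) K}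
    (hM : ∀ i j : Fin m, (i : ℕ) < (j : ℕ) → M i j = 0)
    (hN : ∀ i j : Fin m, (i : ℕ) < (j : ℕ) → N i j = 0) (i : Fin m) :
    (M * N) i i = M i i * N i i := by
  rw [Matrix.mul_apply]
  refine Finset.sum_eq_single i (fun k _ hk => ?_) (by simp)
  rcases lt_or_gt_of_ne hk with h | h
  · rw [hN k i h, mul_zero]
  · rw [hM i k h, zero_mul]

lemma bneg_mul {M N : Matrix (Fin m) (Fin m) K} (hM : M ∈ Bneg O m) (hN : N ∈ Bneg O m) :
    M * N ∈ Bneg O m := by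
  obtain ⟨hM1, hM2, hM3⟩ := hM
  obtain ⟨hN1, hN2, hN3⟩ := hN
  refine ⟨memO_mul O hM1 hN1, fun i j hij => ?_, fun i => ?_⟩
  · rw [Matrix.mul_apply]
    refine Finset.sum_eq_zero fun k _ => ?_
    rcases lt_or_ge (k : ℕ) (j : ℕ) with h | h
    · rw [hN2 k j h, mul_zero]
    · rw [hM2 i k (lt_of_lt_of_le hij h), zero_mul]
  · obtain ⟨cM, hcM, hcM1⟩ := hM3 i
    obtain ⟨cN, hcN, hcN1⟩ := hN3 i
    refine ⟨cM * cN, O.mul_mem hcM hcN, ?_⟩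
    rw [lower_mul_diag hM2 hN2 i]
    calc M i i * N i i * (cM * cN) = (M i i * cM) * (N i i * cN) := by ring
    _ = 1 := by rw [hcM1, hcN1, one_mul]

end Helpers

/-- The claim `for u⁻ ∈ U⁻_{H_p} and Y ∈ V_supp, u⁻·Y ∈ V_supp iff u⁻ ∈ U⁻_{H_p,O_p}`
from the proof of Theorem 2.5. -/
theorem left_translation_Vsupp {K : Type*} [Field K] (O : Subring K)
    (m n : ℕ) (hm : 1 ≤ m) (hmn : m ≤ n)
    (X₁ : Matrix (Fin m) (Fin m) K) (X₂ : Matrix (Fin m) (Fin (n - m)) K)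
    (X₃ : Matrix (Fin m) (Fin m) K) (X₄ : Matrix (Fin m) (Fin (n - m)) K)
    (hX₁ : X₁ ∈ BnegBpos O m) (hX₂ : MemO O X₂) (hX₃ : MemO O X₃) (hX₄ : MemO O X₄)
    (A C : Matrix (Fin m) (Fin m) K)
    (hAtri : ∀ i j : Fin m, (i : ℕ) < (j : ℕ) → A i j = 0)
    (hAdiag : ∀ i, A i i = 1)
    (hg : (Matrix.fromBlocks A 0 C (A⁻¹)ᵀ)ᵀ * Jmat K m * Matrix.fromBlocks A 0 C (A⁻¹)ᵀ =
      Jmat K m) :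
    Matrix.fromBlocks A 0 C (A⁻¹)ᵀ * Matrix.fromBlocks X₁ X₂ X₃ X₄ ∈ Vsupp O m (n - m) ↔
      MemO O A ∧ MemO O C := by
  classical
  obtain ⟨l, hl, u, hu, rfl⟩ := hX₁
  obtain ⟨hlinv, hll, hll'⟩ := bneg_inv_facts O hl
  obtain ⟨huinv, huu, huu'⟩ := bpos_inv_facts O hu
  have hX₁O : MemO O (l * u) := memO_mul O hl.1 hu.1
  have hcancel : (l * u) * (u⁻¹ * l⁻¹) = 1 := by
    rw [mul_assoc, ← mul_assoc u, huu, one_mul, hll]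
  rw [Matrix.fromBlocks_multiply]
  simp only [Vsupp, Set.mem_setOf_eq, Matrix.toBlocks_fromBlocks₁₁, Matrix.toBlocks_fromBlocks₁₂,
    Matrix.toBlocks_fromBlocks₂₁, Matrix.toBlocks_fromBlocks₂₂, Matrix.zero_mul, add_zero]
  constructor
  · rintro ⟨h1, h2, h3, h4⟩
    obtain ⟨l', hl', u', hu', heq⟩ := h1
    have hA : MemO O A := by
      have hAeq : A = A * ((l * u) * (u⁻¹ * l⁻¹)) := by rw [hcancel, mul_one]
      rw [← mul_assoc, heq] at hAeq
      rw [hAeq]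
      exact memO_mul O (memO_mul O hl'.1 hu'.1) (memO_mul O (bpos_inv_facts O hu).1
        (bneg_inv_facts O hl).1)
    have hdetA : A.det * 1 = 1 := by
      rw [lower_det hAtri, mul_one]
      simp [hAdiag]
    obtain ⟨hAinvO, -, -⟩ := inv_facts O hA O.one_mem hdetA
    have hAinvT : MemO O (A⁻¹)ᵀ := fun i j => hAinvO j i
    have hCX : MemO O (C * (l * u)) := fun i j => by
      have hT : ((A⁻¹)ᵀ * X₃) i j ∈ O := memO_mul O hAinvT hX₃ i j
      have := O.sub_mem (h3 i j) hT
      simpa [Matrix.add_apply] using this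
    have hC : MemO O C := by
      have hCeq : C = C * ((l * u) * (u⁻¹ * l⁻¹)) := by rw [hcancel, mul_one]
      rw [← mul_assoc] at hCeq
      rw [hCeq]
      exact memO_mul O hCX (memO_mul O huinv hlinv)
    exact ⟨hA, hC⟩
  · rintro ⟨hA, hC⟩
    have hAneg : A ∈ Bneg O m := ⟨hA, hAtri, fun i => ⟨1, O.one_mem, by rw [hAdiag i, one_mul]⟩⟩
    have hdetA : A.det * 1 = 1 := by
      rw [lower_det hAtri, mul_one]
      simp [hAdiag]
    obtain ⟨hAinvO, -, -⟩ := inv_facts O hA O.one_mem hdetA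
    have hAinvT : MemO O (A⁻¹)ᵀ := fun i j => hAinvO j i
    refine ⟨⟨A * l, bneg_mul O hAneg hl, u, hu, (mul_assoc A l u).symm⟩,
      memO_mul O hA hX₂, fun i j => ?_, fun i j => ?_⟩
    · simpa [Matrix.add_apply] using O.add_mem (memO_mul O hC hX₁O i j)
        (memO_mul O hAinvT hX₃ i j)
    · simpa [Matrix.add_apply] using O.add_mem (memO_mul O hC hX₂ i j)
        (memO_mul O hAinvT hX₄ i j)
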